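/- Let B, C, D be three non-collinear points of the Euclidean plane ℝ², let O be the circumcenter and r the circumradius of triangle BCD. Let A be a point such that A and D lie strictly on opposite sides of the line through B and C. Then dist(A, O) < r if and only if ∠BAC + ∠BDC > π, where ∠BAC denotes the undirected angle at A between rays AB and AC, valued in [0, π], and similarly for ∠BDC. -/

import Mathlib

/-!
With `[u, v] = u₀ v₁ - u₁ v₀` one has `sin ∠(u, v) ‖u‖ ‖v‖ = |[u, v]|` and
`cos ∠(u, v) ‖u‖ ‖v‖ = ⟪u, v⟫`, so `sin (∠BAC + ∠BDC)` has the sign of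
`|[B - A, C - A]| ⟪B - D, C - D⟫ + ⟪B - A, C - A⟫ |[B - D, C - D]|`.
As `A` and `D` lie on opposite sides of `BC`, the two cross products have opposite signs, which
turns this into `±([B - A, C - A] ⟪B - D, C - D⟫ - ⟪B - A, C - A⟫ [B - D, C - D])`.
Because `B`, `C`, `D` lie on the circle, that polynomial equals `(r² - |A - O|²) [B - D, C - D]`,
so the sine has the sign of `|A - O|² - r²`. Finally `0 < ∠BDC < π`, so the sum exceeds `π`
exactly when its sine is negative.
-/

open Real EuclideanGeometry

theorem Real.sin_neg_iff_pi_lt {θ : ℝ} (h₀ : 0 < θ) (h₂ : θ < 2 * π) :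
    sin θ < 0 ↔ π < θ := by
  constructor
  · intro h
    by_contra! hle
    exact h.not_ge (sin_nonneg_of_nonneg_of_le_pi h₀.le hle)
  · intro h
    have := sin_pos_of_pos_of_lt_pi (x := θ - π) (by linarith) (by linarith)
    rw [sin_sub_pi] at this
    linarith

namespace EuclideanSpace

def cross (u v : EuclideanSpace ℝ (Fin 2)) : ℝ := u 0 * v 1 - u 1 * v 0

theorem inner_eq_coords (u v : EuclideanSpace ℝ (Fin 2)) :
    inner ℝ u v = u 0 * v 0 + u 1 * v 1 := by
  simp [PiLp.inner_apply, Fin.sum_univ_two, mul_comm]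

theorem dist_sq_eq_coords (x y : EuclideanSpace ℝ (Fin 2)) :
    dist x y ^ 2 = (x 0 - y 0) ^ 2 + (x 1 - y 1) ^ 2 := by
  rw [EuclideanSpace.dist_eq, sq_sqrt (by positivity)]
  simp [Fin.sum_univ_two, Real.dist_eq, sq_abs]

theorem sin_angle_mul_norm_mul_norm_eq_abs_cross (u v : EuclideanSpace ℝ (Fin 2)) :
    sin (InnerProductGeometry.angle u v) * (‖u‖ * ‖v‖) = |cross u v| := by
  rw [InnerProductGeometry.sin_angle_mul_norm_mul_norm, ← sqrt_sq_eq_abs]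
  congr 1
  simp only [inner_eq_coords, cross]
  ring

theorem sin_angle_add_angle_mul_norms (u v p q : EuclideanSpace ℝ (Fin 2)) :
    sin (InnerProductGeometry.angle u v + InnerProductGeometry.angle p q) *
        (‖u‖ * ‖v‖ * (‖p‖ * ‖q‖)) =
      |cross u v| * inner ℝ p q + inner ℝ u v * |cross p q| := by
  rw [← sin_angle_mul_norm_mul_norm_eq_abs_cross, ← sin_angle_mul_norm_mul_norm_eq_abs_cross,
    ← InnerProductGeometry.cos_angle_mul_norm_mul_norm,
    ← InnerProductGeometry.cos_angle_mul_norm_mul_norm, sin_add]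
  ring

theorem collinear_iff_cross_vsub_eq_zero {p₁ p₂ p₃ : EuclideanSpace ℝ (Fin 2)} :
    Collinear ℝ {p₁, p₂, p₃} ↔ cross (p₁ -ᵥ p₂) (p₃ -ᵥ p₂) = 0 := by
  rw [collinear_iff_eq_or_eq_or_sin_eq_zero, ← abs_eq_zero (a := cross _ _),
    ← sin_angle_mul_norm_mul_norm_eq_abs_cross, mul_eq_zero, mul_eq_zero, norm_eq_zero,
    norm_eq_zero, vsub_eq_zero_iff_eq, vsub_eq_zero_iff_eq, EuclideanGeometry.angle]
  tauto

theorem cross_vsub_lineMap (A D B C : EuclideanSpace ℝ (Fin 2)) (t : ℝ) :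
    cross (B -ᵥ AffineMap.lineMap A D t) (C -ᵥ AffineMap.lineMap A D t) =
      (1 - t) * cross (B -ᵥ A) (C -ᵥ A) + t * cross (B -ᵥ D) (C -ᵥ D) := by
  simp only [cross, AffineMap.lineMap_apply, vsub_eq_sub, vadd_eq_add, PiLp.sub_apply,
    PiLp.add_apply, PiLp.smul_apply, smul_eq_mul]
  ring

theorem cross_vsub_mul_cross_vsub_neg_of_sOppSide {A B C D : EuclideanSpace ℝ (Fin 2)}
    (hBC : B ≠ C) (h : line[ℝ, B, C].SOppSide A D) :
    cross (B -ᵥ A) (C -ᵥ A) * cross (B -ᵥ D) (C -ᵥ D) < 0 := by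
  have hD : cross (B -ᵥ D) (C -ᵥ D) ≠ 0 := fun h0 ↦
    h.right_notMem <| (collinear_iff_cross_vsub_eq_zero.2 h0).mem_affineSpan_of_mem_of_ne
      (by simp) (by simp) (by simp) hBC
  obtain ⟨P, hP, hAPD⟩ := h.exists_sbtw
  obtain ⟨⟨t, ⟨ht₀, ht₁⟩, rfl⟩, -⟩ := sbtw_iff_mem_image_Ioo_and_ne.1 hAPD
  have hP0 : cross (B -ᵥ AffineMap.lineMap A D t) (C -ᵥ AffineMap.lineMap A D t) = 0 := by
    rw [← collinear_iff_cross_vsub_eq_zero, Set.insert_comm]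
    exact collinear_insert_of_mem_affineSpan_pair hP
  rw [cross_vsub_lineMap] at hP0
  have hmul : (1 - t) * (cross (B -ᵥ A) (C -ᵥ A) * cross (B -ᵥ D) (C -ᵥ D)) =
      -(t * cross (B -ᵥ D) (C -ᵥ D) ^ 2) := by
    linear_combination cross (B -ᵥ D) (C -ᵥ D) * hP0
  refine neg_of_mul_neg_right (a := 1 - t) ?_ (by linarith)
  rw [hmul, neg_lt_zero]
  exact mul_pos ht₀ (pow_two_pos_of_ne_zero hD)

theorem cross_mul_inner_sub_inner_mul_cross {A B C D O : EuclideanSpace ℝ (Fin 2)} {r : ℝ}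
    (hB : dist B O = r) (hC : dist C O = r) (hD : dist D O = r) :
    cross (B -ᵥ A) (C -ᵥ A) * inner ℝ (B -ᵥ D) (C -ᵥ D) -
        inner ℝ (B -ᵥ A) (C -ᵥ A) * cross (B -ᵥ D) (C -ᵥ D) =
      (r ^ 2 - dist A O ^ 2) * cross (B -ᵥ D) (C -ᵥ D) := by
  obtain ⟨hB, hC, hD⟩ :
      dist B O ^ 2 = r ^ 2 ∧ dist C O ^ 2 = r ^ 2 ∧ dist D O ^ 2 = r ^ 2 := by
    subst hB; exact ⟨rfl, by rw [hC], by rw [hD]⟩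
  simp only [dist_sq_eq_coords, inner_eq_coords, cross, vsub_eq_sub, PiLp.sub_apply] at *
  linear_combination ((C 0 - A 0) * (D 1 - A 1) - (C 1 - A 1) * (D 0 - A 0)) * hB
    - ((B 0 - A 0) * (D 1 - A 1) - (B 1 - A 1) * (D 0 - A 0)) * hC
    + ((B 0 - A 0) * (C 1 - A 1) - (B 1 - A 1) * (C 0 - A 0)) * hD

theorem sin_angle_add_angle_mul_dists {A B C D O : EuclideanSpace ℝ (Fin 2)} {r : ℝ}
    (hB : dist B O = r) (hC : dist C O = r) (hD : dist D O = r)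
    (hAD : cross (B -ᵥ A) (C -ᵥ A) * cross (B -ᵥ D) (C -ᵥ D) < 0) :
    sin (∠ B A C + ∠ B D C) * (dist B A * dist C A * (dist B D * dist C D)) =
      (dist A O ^ 2 - r ^ 2) * |cross (B -ᵥ D) (C -ᵥ D)| := by
  have key := cross_mul_inner_sub_inner_mul_cross (A := A) hB hC hD
  simp only [EuclideanGeometry.angle, dist_eq_norm_vsub (EuclideanSpace ℝ (Fin 2)) B,
    dist_eq_norm_vsub (EuclideanSpace ℝ (Fin 2)) C, sin_angle_add_angle_mul_norms]
  rcases mul_neg_iff.1 hAD with ⟨hA, hD⟩ | ⟨hA, hD⟩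
  · rw [abs_of_pos hA, abs_of_neg hD]
    linear_combination key
  · rw [abs_of_neg hA, abs_of_pos hD]
    linear_combination -key

end EuclideanSpace

open EuclideanSpace

theorem inside_circumcircle_iff_angle_sum_gt_pi
    (A B C D O : EuclideanSpace ℝ (Fin 2)) (r : ℝ)
    (hncol : ¬ Collinear ℝ ({B, C, D} : Set (EuclideanSpace ℝ (Fin 2))))
    (hB : dist B O = r) (hC : dist C O = r) (hD : dist D O = r)
    (hside : (affineSpan ℝ ({B, C} : Set (EuclideanSpace ℝ (Fin 2)))).SOppSide A D) :
    dist A O < r ↔ ∠ B A C + ∠ B D C > π := by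
  have hBDC : ¬Collinear ℝ {B, D, C} := by rwa [Set.pair_comm]
  have hcross : 0 < |cross (B -ᵥ D) (C -ᵥ D)| :=
    abs_pos.2 (mt collinear_iff_cross_vsub_eq_zero.2 hBDC)
  have hA : A ∉ line[ℝ, B, C] := hside.left_notMem
  have hdist : 0 < dist B A * dist C A * (dist B D * dist C D) := by
    have hBA : B ≠ A := fun h ↦ hA (h ▸ left_mem_affineSpan_pair ℝ B C)
    have hCA : C ≠ A := fun h ↦ hA (h ▸ right_mem_affineSpan_pair ℝ B C)
    have hBD := ne₁₃_of_not_collinear hncol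
    have hCD := ne₂₃_of_not_collinear hncol
    simp only [← dist_pos] at hBA hCA hBD hCD
    positivity
  have hsin := sin_angle_add_angle_mul_dists hB hC hD
    (cross_vsub_mul_cross_vsub_neg_of_sOppSide (ne₁₂_of_not_collinear hncol) hside)
  have hsign : sin (∠ B A C + ∠ B D C) < 0 ↔ dist A O ^ 2 - r ^ 2 < 0 := by
    rw [← mul_lt_mul_iff_of_pos_right hdist,
      ← mul_lt_mul_iff_of_pos_right hcross (b := dist A O ^ 2 - r ^ 2), zero_mul, zero_mul, hsin]
  have hβ₀ := angle_pos_of_not_collinear hBDC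
  have hβπ := angle_lt_pi_of_not_collinear hBDC
  rw [gt_iff_lt, ← sin_neg_iff_pi_lt (by linarith [angle_nonneg B A C])
      (by linarith [angle_le_pi B A C]), hsign, sub_neg, ← hB,
    sq_lt_sq₀ dist_nonneg dist_nonneg]
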